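/- Additivity of the RDS integral: for α of bounded variation on [a,b] and m ∈ (a,b), a bounded f is RDS integrable on [a,b] with respect to α if and only if it is RDS integrable on [a,m] and on [m,b]; in that case ∫_a^m f dα + ∫_m^b f dα = ∫_a^b f dα. -/

import Mathlib

open Set Filter Topology
open scoped Classical

noncomputable section

/-- A partition `a = x 0 < x 1 < ... < x n = b` of `[a,b]`. -/
structure RDSPartition (a b : ℝ) where
  n : ℕ
  x : ℕ → ℝ
  mono : ∀ i, i < n → x i < x (i + 1)
  first : x 0 = a
  last : x n = b

/-- Right limit `α(t+)`, with the convention `α(b+) = α(b)` at the right endpoint. -/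
def rLim (b : ℝ) (α : ℝ → ℝ) (t : ℝ) : ℝ :=
  if t < b then Function.rightLim α t else α t

/-- Left limit `α(t-)`, with the convention `α(a-) = α(a)` at the left endpoint. -/
def lLim (a : ℝ) (α : ℝ → ℝ) (t : ℝ) : ℝ :=
  if a < t then Function.leftLim α t else α t

/-- `α`-length of the singleton `{t}` inside `[a,b]`: `α(t+) - α(t-)`. -/
def muPt (a b : ℝ) (α : ℝ → ℝ) (t : ℝ) : ℝ :=
  rLim b α t - lLim a α t

/-- `α`-length of the open interval `(c,d)` inside `[a,b]`: `α(d-) - α(c+)`. -/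
def muIoo (a b : ℝ) (α : ℝ → ℝ) (c d : ℝ) : ℝ :=
  lLim a α d - rLim b α c

/-- `f` is a step function with respect to the partition `P`: it is constant on each
open subinterval `(x (i-1), x i)` of `P`. -/
def IsStepOn (a b : ℝ) (f : ℝ → ℝ) (P : RDSPartition a b) : Prop :=
  ∀ i, i < P.n → ∀ s ∈ Set.Ioo (P.x i) (P.x (i + 1)),
    f s = f ((P.x i + P.x (i + 1)) / 2)

/-- The RDS integral of a step function with respect to the partition `P`:
`Σ_{i=0}^n f(x_i) μ_α({x_i}) + Σ_{i=1}^n c_i μ_α(I_i)`. -/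
def stepInt (a b : ℝ) (α : ℝ → ℝ) (P : RDSPartition a b) (f : ℝ → ℝ) : ℝ :=
  (∑ i ∈ Finset.range (P.n + 1), f (P.x i) * muPt a b α (P.x i)) +
    ∑ i ∈ Finset.range P.n,
      f ((P.x i + P.x (i + 1)) / 2) * muIoo a b α (P.x i) (P.x (i + 1))

/-- Upper envelope: infimum of RDS step integrals of step functions above `f` on `[a,b]`. -/
def upperRDS (a b : ℝ) (α f : ℝ → ℝ) : ℝ :=
  sInf { r | ∃ (u : ℝ → ℝ) (P : RDSPartition a b), IsStepOn a b u P ∧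
    (∀ t ∈ Set.Icc a b, f t ≤ u t) ∧ r = stepInt a b α P u }

/-- Lower envelope: supremum of RDS step integrals of step functions below `f` on `[a,b]`. -/
def lowerRDS (a b : ℝ) (α f : ℝ → ℝ) : ℝ :=
  sSup { r | ∃ (v : ℝ → ℝ) (P : RDSPartition a b), IsStepOn a b v P ∧
    (∀ t ∈ Set.Icc a b, v t ≤ f t) ∧ r = stepInt a b α P v }

/-- RDS integrability with respect to an increasing integrator. -/
def RDSIntegrableInc (a b : ℝ) (α f : ℝ → ℝ) : Prop :=
  lowerRDS a b α f = upperRDS a b α f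

/-- The RDS integral with respect to an increasing integrator. -/
def RDSIntegralInc (a b : ℝ) (α f : ℝ → ℝ) : ℝ := upperRDS a b α f

/-- RDS integrability with respect to a BV integrator: some Jordan decomposition
into increasing functions works. -/
def RDSIntegrable (a b : ℝ) (α f : ℝ → ℝ) : Prop :=
  ∃ αp αm : ℝ → ℝ, MonotoneOn αp (Set.Icc a b) ∧ MonotoneOn αm (Set.Icc a b) ∧
    (∀ t ∈ Set.Icc a b, α t = αp t - αm t) ∧
    RDSIntegrableInc a b αp f ∧ RDSIntegrableInc a b αm f

/-- The RDS integral with respect to a BV integrator. -/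
def RDSIntegral (a b : ℝ) (α f : ℝ → ℝ) : ℝ :=
  if h : RDSIntegrable a b α f then
    RDSIntegralInc a b h.choose f - RDSIntegralInc a b h.choose_spec.choose f
  else 0

/-- `f` is bounded on `[a,b]`. -/
def BddOn (a b : ℝ) (f : ℝ → ℝ) : Prop :=
  ∃ M : ℝ, ∀ t ∈ Set.Icc a b, |f t| ≤ M

end

/-!
For an increasing integrator `g`, the RDS step integral is a Lebesgue–Stieltjes integral. Let `μ_g`
be the Stieltjes measure of the right-continuous regularisation of `g` frozen outside `[a,b]`: it
gives `{x}` the mass `g(x+) - g(x-)` and `(c,d)` the mass `g(d-) - g(c+)`, so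
`stepInt a b g P u = ∫_{[a,b]} u dμ_g` for every step function `u` on `P`, and the envelopes no
longer depend on partitions. Additivity becomes measure
theory: `μ_{g+h} = μ_g + μ_h`, and `μ_g` is the sum of the measures built on `[a,m]` and `[m,b]`,
each carried by its own half. So the upper envelope is additive over `[a,m] ∪ [m,b]` and
subadditive in the integrator. As `lower f = -upper (-f)` and `upper (-f) + upper f ≥ 0`,
integrability (this sum vanishing) splits over the two halves, and the integrals with respect to two
Jordan decompositions agree. Decompositions on the halves are glued after shifting one of them by a
constant, which does not change the measure.
-/

open MeasureTheory Function

noncomputable section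

def IsStepOff (a b : ℝ) (S : Finset ℝ) (u : ℝ → ℝ) : Prop :=
  ∀ s t, a ≤ s → s ≤ t → t ≤ b → (∀ x ∈ S, x ∉ Icc s t) → u s = u t

namespace RDSPartition

variable {a b : ℝ} (P : RDSPartition a b) {u : ℝ → ℝ}

def points : Finset ℝ := (Finset.range (P.n + 1)).image P.x

lemma mem_points {t : ℝ} : t ∈ P.points ↔ ∃ j ≤ P.n, P.x j = t := by
  simp only [points, Finset.mem_image, Finset.mem_range, Nat.lt_succ_iff]

lemma strictMonoOn_x : StrictMonoOn P.x (Iic P.n) :=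
  strictMonoOn_Iic_of_lt_succ P.mono

lemma x_le_x {i j : ℕ} (hij : i ≤ j) (hj : j ≤ P.n) : P.x i ≤ P.x j :=
  P.strictMonoOn_x.monotoneOn (mem_Iic.2 (hij.trans hj)) (mem_Iic.2 hj) hij

lemma x_mem_Icc {i : ℕ} (hi : i ≤ P.n) : P.x i ∈ Icc a b := by
  have h0 := P.x_le_x (Nat.zero_le i) hi
  have hn := P.x_le_x hi le_rfl
  rw [P.first] at h0
  rw [P.last] at hn
  exact ⟨h0, hn⟩

lemma x_notMem_Ioo {i j : ℕ} (hi : i < P.n) (hj : j ≤ P.n) :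
    P.x j ∉ Ioo (P.x i) (P.x (i + 1)) := by
  rintro ⟨hij, hji⟩
  rcases le_or_gt j i with h | h
  · exact (P.x_le_x h hi.le).not_gt hij
  · exact (P.x_le_x (Nat.succ_le_of_lt h) hj).not_gt hji

lemma exists_mem_Ioo {s : ℝ} (hs : s ∈ Icc a b) (hsP : s ∉ P.points) :
    ∃ i < P.n, s ∈ Ioo (P.x i) (P.x (i + 1)) := by
  have hne : ∀ j ≤ P.n, P.x j ≠ s := fun j hj h => hsP (P.mem_points.2 ⟨j, hj, h⟩)
  have hsb : s < P.x P.n := by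
    rw [P.last]
    exact lt_of_le_of_ne hs.2 fun h => hne P.n le_rfl (P.last.trans h.symm)
  have hex : ∃ j, s < P.x j := ⟨P.n, hsb⟩
  have hj0 : Nat.find hex ≠ 0 := by
    intro h
    have hs0 := Nat.find_spec hex
    rw [h, P.first] at hs0
    exact hs0.not_ge hs.1
  obtain ⟨i, hi⟩ := Nat.exists_eq_succ_of_ne_zero hj0
  have hin : i < P.n := by have := Nat.find_min' hex hsb; omega
  have hxi : P.x i ≤ s := not_lt.1 (Nat.find_min hex (by omega))
  refine ⟨i, hin, lt_of_le_of_ne hxi (hne i hin.le), ?_⟩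
  have hs1 := Nat.find_spec hex
  rwa [hi] at hs1

lemma isStepOff_of_isStepOn (hu : IsStepOn a b u P) : IsStepOff a b P.points u := by
  intro s t has hst htb hS
  obtain ⟨i, hi, hsi⟩ := P.exists_mem_Ioo ⟨has, hst.trans htb⟩ fun hs => hS s hs ⟨le_rfl, hst⟩
  have hti : t < P.x (i + 1) := by
    by_contra! h
    exact hS _ (P.mem_points.2 ⟨i + 1, hi, rfl⟩) ⟨hsi.2.le, h⟩
  rw [hu i hi s hsi, hu i hi t ⟨hsi.1.trans_le hst, hti⟩]

lemma isStepOn_of_isStepOff {S : Finset ℝ} (hu : IsStepOff a b S u)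
    (hS : ∀ x ∈ S, x ∈ Icc a b → x ∈ P.points) : IsStepOn a b u P := by
  intro i hi s hs
  have hgap : ∀ s t, s ∈ Ioo (P.x i) (P.x (i + 1)) → t ∈ Ioo (P.x i) (P.x (i + 1)) → s ≤ t →
      u s = u t := by
    intro s t hs ht hst
    have hsa := (P.x_mem_Icc hi.le).1.trans hs.1.le
    have htb := ht.2.le.trans (P.x_mem_Icc hi).2
    refine hu s t hsa hst htb fun x hx hxst => ?_
    obtain ⟨j, hj, rfl⟩ := P.mem_points.1 (hS x hx ⟨hsa.trans hxst.1, hxst.2.trans htb⟩)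
    exact P.x_notMem_Ioo hi hj ⟨hs.1.trans_le hxst.1, hxst.2.trans_lt ht.2⟩
  have hc : (P.x i + P.x (i + 1)) / 2 ∈ Ioo (P.x i) (P.x (i + 1)) :=
    ⟨by linarith [hs.1, hs.2], by linarith [hs.1, hs.2]⟩
  rcases le_total s ((P.x i + P.x (i + 1)) / 2) with h | h
  · exact hgap _ _ hs hc h
  · exact (hgap _ _ hc hs h).symm

lemma exists_forall_mem_points (hab : a ≤ b) (S : Finset ℝ) :
    ∃ P : RDSPartition a b, ∀ x ∈ S, x ∈ Icc a b → x ∈ P.points := by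
  -- `P` lists `{a, b} ∪ (S ∩ [a,b])` increasingly, and stays at `b` after its last index.
  set T := insert a (insert b (S.filter (· ∈ Icc a b)))
  have hT : ∀ y ∈ T, y ∈ Icc a b := by
    intro y hy
    simp only [T, Finset.mem_insert, Finset.mem_filter] at hy
    rcases hy with rfl | rfl | ⟨-, hy⟩
    exacts [⟨le_rfl, hab⟩, ⟨hab, le_rfl⟩, hy]
  have haT : a ∈ T := Finset.mem_insert_self _ _
  have hbT : b ∈ T := Finset.mem_insert_of_mem (Finset.mem_insert_self _ _)
  have hk : 0 < T.card := Finset.card_pos.2 ⟨a, haT⟩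
  let e := T.orderEmbOfFin rfl
  refine ⟨⟨T.card - 1, fun i => e ⟨min i (T.card - 1), by omega⟩,
    fun i hi => e.strictMono (Fin.mk_lt_mk.2 (by omega)), ?_, ?_⟩, ?_⟩
  · rw [show (⟨min 0 (T.card - 1), _⟩ : Fin T.card) = ⟨0, hk⟩ from Fin.ext (Nat.zero_min _),
      Finset.orderEmbOfFin_zero]
    exact le_antisymm (T.min'_le a haT) (T.le_min' _ _ fun y hy => (hT y hy).1)
  · rw [show (⟨min (T.card - 1) (T.card - 1), _⟩ : Fin T.card) = ⟨T.card - 1, by omega⟩ from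
      Fin.ext (min_self _), Finset.orderEmbOfFin_last _ hk]
    exact le_antisymm (T.max'_le _ _ fun y hy => (hT y hy).2) (T.le_max' b hbT)
  · intro x hx hxab
    have hxT : x ∈ T := Finset.mem_insert_of_mem (Finset.mem_insert_of_mem
      (Finset.mem_filter.2 ⟨hx, hxab⟩))
    obtain ⟨j, rfl⟩ : x ∈ range e := by rw [Finset.range_orderEmbOfFin]; exact hxT
    have hj : (j : ℕ) ≤ T.card - 1 := Nat.le_sub_one_of_lt j.2
    exact (mem_points _).2 ⟨j, hj, congrArg e (Fin.ext (min_eq_left hj))⟩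

end RDSPartition

section StepFunctions

variable {a b : ℝ} {u v w : ℝ → ℝ}

def IsStepFun (a b : ℝ) (u : ℝ → ℝ) : Prop :=
  ∃ P : RDSPartition a b, IsStepOn a b u P

lemma isStepFun_iff_exists_isStepOff (hab : a ≤ b) :
    IsStepFun a b u ↔ ∃ S, IsStepOff a b S u := by
  refine ⟨fun ⟨P, hP⟩ => ⟨_, P.isStepOff_of_isStepOn hP⟩, fun ⟨S, hS⟩ => ?_⟩
  obtain ⟨P, hP⟩ := RDSPartition.exists_forall_mem_points hab S
  exact ⟨P, P.isStepOn_of_isStepOff hS hP⟩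

lemma isStepFun_const (hab : a ≤ b) (c : ℝ) : IsStepFun a b fun _ => c :=
  (isStepFun_iff_exists_isStepOff hab).2 ⟨∅, fun _ _ _ _ _ _ => rfl⟩

lemma IsStepFun.min (hab : a ≤ b) (hu : IsStepFun a b u) (hv : IsStepFun a b v) :
    IsStepFun a b fun t => min (u t) (v t) := by
  rw [isStepFun_iff_exists_isStepOff hab] at hu hv ⊢
  obtain ⟨S, hS⟩ := hu
  obtain ⟨T, hT⟩ := hv
  refine ⟨S ∪ T, fun s t has hst htb hst' => ?_⟩
  change Min.min (u s) (v s) = Min.min (u t) (v t)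
  rw [hS s t has hst htb fun x hx => hst' x (Finset.mem_union_left T hx),
    hT s t has hst htb fun x hx => hst' x (Finset.mem_union_right S hx)]

lemma IsStepFun.mono {a' b' : ℝ} (hu : IsStepFun a b u) (ha : a ≤ a') (hab' : a' ≤ b')
    (hb : b' ≤ b) : IsStepFun a' b' u := by
  rw [isStepFun_iff_exists_isStepOff (ha.trans (hab'.trans hb))] at hu
  rw [isStepFun_iff_exists_isStepOff hab']
  obtain ⟨S, hS⟩ := hu
  exact ⟨S, fun s t has hst htb => hS s t (ha.trans has) hst (htb.trans hb)⟩

lemma IsStepFun.glue {m : ℝ} (ham : a ≤ m) (hmb : m ≤ b) (hu : IsStepFun a m u)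
    (hv : IsStepFun m b v) (hwu : EqOn w u (Ico a m)) (hwv : EqOn w v (Ioc m b)) :
    IsStepFun a b w := by
  rw [isStepFun_iff_exists_isStepOff ham] at hu
  rw [isStepFun_iff_exists_isStepOff hmb] at hv
  rw [isStepFun_iff_exists_isStepOff (ham.trans hmb)]
  obtain ⟨S, hS⟩ := hu
  obtain ⟨T, hT⟩ := hv
  refine ⟨insert m (S ∪ T), fun s t has hst htb hst' => ?_⟩
  have hm : m ∉ Icc s t := hst' m (Finset.mem_insert_self _ _)
  have hS' : ∀ x ∈ S, x ∉ Icc s t := fun x hx =>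
    hst' x (Finset.mem_insert_of_mem (Finset.mem_union_left T hx))
  have hT' : ∀ x ∈ T, x ∉ Icc s t := fun x hx =>
    hst' x (Finset.mem_insert_of_mem (Finset.mem_union_right S hx))
  rcases lt_or_ge t m with htm | hmt
  · rw [hwu ⟨has, hst.trans_lt htm⟩, hwu ⟨has.trans hst, htm⟩]
    exact hS s t has hst htm.le hS'
  · have hms : m < s := lt_of_not_ge fun hsm => hm ⟨hsm, hmt⟩
    rw [hwv ⟨hms, hst.trans htb⟩, hwv ⟨hms.trans_le hst, htb⟩]
    exact hT s t hms.le hst htb hT'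

lemma exists_isStepFun_glue_le {f : ℝ → ℝ} {m : ℝ} (ham : a ≤ m) (hmb : m ≤ b)
    (hu : IsStepFun a m u) (hv : IsStepFun m b v) (hfu : ∀ t ∈ Icc a m, f t ≤ u t)
    (hfv : ∀ t ∈ Icc m b, f t ≤ v t) :
    ∃ w, IsStepFun a b w ∧ (∀ t ∈ Icc a b, f t ≤ w t) ∧ (∀ t ∈ Icc a m, w t ≤ u t) ∧
      ∀ t ∈ Icc m b, w t ≤ v t := by
  set w : ℝ → ℝ := fun t => if t < m then u t else if m < t then v t else min (u m) (v m)
  have hwm : w m = min (u m) (v m) := (if_neg (lt_irrefl m)).trans (if_neg (lt_irrefl m))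
  have hw_lt : ∀ t < m, w t = u t := fun t ht => if_pos ht
  have hw_gt : ∀ t, m < t → w t = v t := fun t ht => (if_neg ht.not_gt).trans (if_pos ht)
  refine ⟨w, hu.glue ham hmb hv (fun t ht => hw_lt t ht.2) fun t ht => hw_gt t ht.1,
    fun t ht => ?_, fun t ht => ?_, fun t ht => ?_⟩
  · rcases lt_trichotomy t m with htm | rfl | hmt
    · rw [hw_lt t htm]; exact hfu t ⟨ht.1, htm.le⟩
    · rw [hwm]; exact le_min (hfu t ⟨ht.1, le_rfl⟩) (hfv t ⟨le_rfl, ht.2⟩)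
    · rw [hw_gt t hmt]; exact hfv t ⟨hmt.le, ht.2⟩
  · rcases ht.2.lt_or_eq with htm | rfl
    · rw [hw_lt t htm]
    · rw [hwm]; exact min_le_left _ _
  · rcases ht.1.lt_or_eq with hmt | rfl
    · rw [hw_gt t hmt]
    · rw [hwm]; exact min_le_right _ _

end StepFunctions

section StepIntegral

variable {a b : ℝ} {u : ℝ → ℝ} {μ : Measure ℝ} [IsLocallyFiniteMeasure μ]

namespace RDSPartition

variable (P : RDSPartition a b)

lemma integral_Ioc_of_isStepOn (hu : IsStepOn a b u P) {i : ℕ} (hi : i < P.n) :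
    IntegrableOn u (Ioc (P.x i) (P.x (i + 1))) μ ∧
      ∫ t in Ioc (P.x i) (P.x (i + 1)), u t ∂μ =
        u ((P.x i + P.x (i + 1)) / 2) * μ.real (Ioo (P.x i) (P.x (i + 1))) +
          u (P.x (i + 1)) * μ.real {P.x (i + 1)} := by
  have hgap : IntegrableOn u (Ioo (P.x i) (P.x (i + 1))) μ :=
    (integrableOn_const measure_Ioo_lt_top.ne).congr_fun (fun t ht => (hu i hi t ht).symm)
      measurableSet_Ioo
  have hpt : IntegrableOn u {P.x (i + 1)} μ :=
    (integrableOn_singleton_iff).2 (Or.inr measure_singleton_lt_top)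
  rw [← Ioo_union_right (P.mono i hi)]
  refine ⟨hgap.union hpt, ?_⟩
  rw [setIntegral_union (disjoint_singleton_right.2 fun h => h.2.false)
      (measurableSet_singleton _) hgap hpt,
    setIntegral_congr_fun measurableSet_Ioo fun t ht => hu i hi t ht, setIntegral_const,
    integral_singleton, smul_eq_mul, smul_eq_mul, mul_comm, mul_comm (μ.real _)]

lemma integral_Icc_of_isStepOn (hu : IsStepOn a b u P) :
    IntegrableOn u (Icc a b) μ ∧
      ∫ t in Icc a b, u t ∂μ =
        ∑ i ∈ Finset.range (P.n + 1), u (P.x i) * μ.real {P.x i} +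
          ∑ i ∈ Finset.range P.n,
            u ((P.x i + P.x (i + 1)) / 2) * μ.real (Ioo (P.x i) (P.x (i + 1))) := by
  suffices h : ∀ k ≤ P.n, IntegrableOn u (Icc a (P.x k)) μ ∧
      ∫ t in Icc a (P.x k), u t ∂μ =
        ∑ i ∈ Finset.range (k + 1), u (P.x i) * μ.real {P.x i} +
          ∑ i ∈ Finset.range k,
            u ((P.x i + P.x (i + 1)) / 2) * μ.real (Ioo (P.x i) (P.x (i + 1))) by
    simpa only [P.last] using h P.n le_rfl
  intro k hk
  induction k with
  | zero =>
    rw [P.first, Icc_self]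
    refine ⟨(integrableOn_singleton_iff).2 (Or.inr measure_singleton_lt_top), ?_⟩
    rw [integral_singleton, smul_eq_mul, Finset.sum_range_one, Finset.sum_range_zero, add_zero,
      P.first, mul_comm]
  | succ k ih =>
    obtain ⟨hint, heq⟩ := ih (by omega)
    obtain ⟨hint', heq'⟩ := P.integral_Ioc_of_isStepOn (μ := μ) hu (i := k) (by omega)
    rw [← Icc_union_Ioc_eq_Icc (P.x_mem_Icc (by omega : k ≤ P.n)).1
      (P.x_le_x (Nat.le_succ k) hk)]
    refine ⟨hint.union hint', ?_⟩
    rw [setIntegral_union (disjoint_left.2 fun t h1 h2 => h2.1.not_ge h1.2) measurableSet_Ioc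
      hint hint', heq, heq']
    simp only [Finset.sum_range_succ]
    ring

end RDSPartition

lemma IsStepFun.integrableOn (hu : IsStepFun a b u) : IntegrableOn u (Icc a b) μ :=
  let ⟨P, hP⟩ := hu
  (P.integral_Icc_of_isStepOn hP).1

end StepIntegral

section StieltjesMeasure

lemma Monotone.leftLim_stieltjesFunction {φ : ℝ → ℝ} (hφ : Monotone φ) (t : ℝ) :
    leftLim hφ.stieltjesFunction t = leftLim φ t :=
  leftLim_rightLim (hφ.tendsto_leftLim t)

lemma Monotone.stieltjesFunction_measure_real_singleton {φ : ℝ → ℝ} (hφ : Monotone φ) (t : ℝ) :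
    hφ.stieltjesFunction.measure.real {t} = rightLim φ t - leftLim φ t := by
  rw [measureReal_def, StieltjesFunction.measure_singleton, Monotone.stieltjesFunction_eq,
    hφ.leftLim_stieltjesFunction, ENNReal.toReal_ofReal]
  exact sub_nonneg.2 (hφ.leftLim_le_rightLim le_rfl)

lemma Monotone.stieltjesFunction_measure_real_Ioo {φ : ℝ → ℝ} (hφ : Monotone φ) {c d : ℝ}
    (hcd : c < d) :
    hφ.stieltjesFunction.measure.real (Ioo c d) = leftLim φ d - rightLim φ c := by
  rw [measureReal_def, StieltjesFunction.measure_Ioo, Monotone.stieltjesFunction_eq,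
    hφ.leftLim_stieltjesFunction, ENNReal.toReal_ofReal]
  exact sub_nonneg.2 (hφ.rightLim_le_leftLim hcd)

lemma Monotone.stieltjesFunction_measure_congr {φ ψ : ℝ → ℝ} (hφ : Monotone φ) (hψ : Monotone ψ)
    (c : ℝ) (h : ∀ t, φ t = ψ t + c) :
    hφ.stieltjesFunction.measure = hψ.stieltjesFunction.measure := by
  have hshift : hφ.stieltjesFunction = hψ.stieltjesFunction + StieltjesFunction.const ℝ c := by
    ext t
    exact tendsto_nhds_unique ((hφ.tendsto_rightLim t).congr fun s => h s)
      ((hψ.tendsto_rightLim t).add_const c)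
  rw [hshift, StieltjesFunction.measure_add, StieltjesFunction.measure_const, add_zero]

lemma Monotone.stieltjesFunction_measure_add {φ ψ : ℝ → ℝ} (hφ : Monotone φ) (hψ : Monotone ψ) :
    (hφ.add hψ).stieltjesFunction.measure =
      hφ.stieltjesFunction.measure + hψ.stieltjesFunction.measure := by
  have hsum : (hφ.add hψ).stieltjesFunction = hφ.stieltjesFunction + hψ.stieltjesFunction := by
    ext t
    exact tendsto_nhds_unique ((hφ.add hψ).tendsto_rightLim t)
      ((hφ.tendsto_rightLim t).add (hψ.tendsto_rightLim t))
  rw [hsum, StieltjesFunction.measure_add]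

end StieltjesMeasure

section RDSMeasure

variable {a b : ℝ} {g : ℝ → ℝ}

lemma MonotoneOn.monotone_IccExtend (hab : a ≤ b) (hg : MonotoneOn g (Icc a b)) :
    Monotone (IccExtend hab (g ∘ (↑))) :=
  (monotoneOn_iff_monotone.1 hg).IccExtend hab

/-- Freezing `g` outside `[a,b]` before taking one-sided limits produces exactly the conventions
`α(a-) = α(a)` and `α(b+) = α(b)` of `muPt` and `muIoo`. -/
def rdsMeasure (hab : a ≤ b) (hg : MonotoneOn g (Icc a b)) : Measure ℝ :=
  (hg.monotone_IccExtend hab).stieltjesFunction.measure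

instance isLocallyFiniteMeasure_rdsMeasure (hab : a ≤ b) (hg : MonotoneOn g (Icc a b)) :
    IsLocallyFiniteMeasure (rdsMeasure hab hg) := by
  unfold rdsMeasure
  infer_instance

lemma rightLim_IccExtend_of_le (hab : a ≤ b) (hg : MonotoneOn g (Icc a b)) {t : ℝ}
    (hbt : b ≤ t) :
    rightLim (IccExtend hab (g ∘ (↑))) t = g b := by
  have hG := hg.monotone_IccExtend hab
  apply le_antisymm
  · calc rightLim (IccExtend hab (g ∘ (↑))) t ≤ IccExtend hab (g ∘ (↑)) (t + 1) :=
          hG.rightLim_le (lt_add_one t)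
      _ = g b := IccExtend_of_right_le hab _ (by linarith)
  · calc g b = IccExtend hab (g ∘ (↑)) t := (IccExtend_of_right_le hab (g ∘ (↑)) hbt).symm
      _ ≤ rightLim (IccExtend hab (g ∘ (↑))) t := hG.le_rightLim le_rfl

lemma leftLim_IccExtend_of_le (hab : a ≤ b) (hg : MonotoneOn g (Icc a b)) {t : ℝ}
    (hta : t ≤ a) :
    leftLim (IccExtend hab (g ∘ (↑))) t = g a := by
  have hG := hg.monotone_IccExtend hab
  apply le_antisymm
  · calc leftLim (IccExtend hab (g ∘ (↑))) t ≤ IccExtend hab (g ∘ (↑)) t := hG.leftLim_le le_rfl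
      _ = g a := IccExtend_of_le_left hab _ hta
  · calc g a = IccExtend hab (g ∘ (↑)) (t - 1) :=
          (IccExtend_of_le_left hab (g ∘ (↑)) (by linarith)).symm
      _ ≤ leftLim (IccExtend hab (g ∘ (↑))) t := hG.le_leftLim (sub_one_lt t)

lemma rightLim_IccExtend (hab : a ≤ b) (hg : MonotoneOn g (Icc a b)) {t : ℝ}
    (ht : t ∈ Icc a b) :
    rightLim (IccExtend hab (g ∘ (↑))) t = rLim b g t := by
  unfold rLim
  split_ifs with htb
  · have heq : IccExtend hab (g ∘ (↑)) =ᶠ[𝓝[>] t] g := by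
      filter_upwards [Ioo_mem_nhdsGT htb] with s hs
      exact IccExtend_of_mem hab _ ⟨ht.1.trans hs.1.le, hs.2.le⟩
    exact (rightLim_eq_of_tendsto
      (((hg.monotone_IccExtend hab).tendsto_rightLim t).congr' heq)).symm
  · rw [le_antisymm ht.2 (not_lt.1 htb)]
    exact rightLim_IccExtend_of_le hab hg le_rfl

lemma leftLim_IccExtend (hab : a ≤ b) (hg : MonotoneOn g (Icc a b)) {t : ℝ}
    (ht : t ∈ Icc a b) :
    leftLim (IccExtend hab (g ∘ (↑))) t = lLim a g t := by
  unfold lLim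
  split_ifs with hat
  · have heq : IccExtend hab (g ∘ (↑)) =ᶠ[𝓝[<] t] g := by
      filter_upwards [Ioo_mem_nhdsLT hat] with s hs
      exact IccExtend_of_mem hab _ ⟨hs.1.le, hs.2.le.trans ht.2⟩
    exact (leftLim_eq_of_tendsto
      (((hg.monotone_IccExtend hab).tendsto_leftLim t).congr' heq)).symm
  · rw [← le_antisymm ht.1 (not_lt.1 hat)]
    exact leftLim_IccExtend_of_le hab hg le_rfl

lemma rdsMeasure_real_singleton (hab : a ≤ b) (hg : MonotoneOn g (Icc a b)) {t : ℝ}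
    (ht : t ∈ Icc a b) :
    (rdsMeasure hab hg).real {t} = muPt a b g t := by
  rw [rdsMeasure, Monotone.stieltjesFunction_measure_real_singleton,
    rightLim_IccExtend hab hg ht, leftLim_IccExtend hab hg ht, muPt]

lemma rdsMeasure_real_Ioo (hab : a ≤ b) (hg : MonotoneOn g (Icc a b)) {c d : ℝ} (hc : a ≤ c)
    (hcd : c < d) (hd : d ≤ b) :
    (rdsMeasure hab hg).real (Ioo c d) = muIoo a b g c d := by
  rw [rdsMeasure, Monotone.stieltjesFunction_measure_real_Ioo _ hcd,
    rightLim_IccExtend hab hg ⟨hc, by linarith⟩, leftLim_IccExtend hab hg ⟨by linarith, hd⟩,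
    muIoo]

lemma rdsMeasure_Ioc_eq_zero (hab : a ≤ b) (hg : MonotoneOn g (Icc a b)) {c : ℝ} (hbc : b ≤ c) :
    rdsMeasure hab hg (Ioc b c) = 0 := by
  rw [rdsMeasure, StieltjesFunction.measure_Ioc, Monotone.stieltjesFunction_eq,
    Monotone.stieltjesFunction_eq, rightLim_IccExtend_of_le hab hg hbc,
    rightLim_IccExtend_of_le hab hg le_rfl, sub_self, ENNReal.ofReal_zero]

lemma rdsMeasure_Ico_eq_zero (hab : a ≤ b) (hg : MonotoneOn g (Icc a b)) {c : ℝ} (hca : c ≤ a) :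
    rdsMeasure hab hg (Ico c a) = 0 := by
  rw [rdsMeasure, StieltjesFunction.measure_Ico, Monotone.leftLim_stieltjesFunction,
    Monotone.leftLim_stieltjesFunction, leftLim_IccExtend_of_le hab hg hca,
    leftLim_IccExtend_of_le hab hg le_rfl, sub_self, ENNReal.ofReal_zero]

lemma rdsMeasure_congr {g₁ g₂ : ℝ → ℝ} (hab : a ≤ b) (hg₁ : MonotoneOn g₁ (Icc a b))
    (hg₂ : MonotoneOn g₂ (Icc a b)) (c : ℝ) (h : ∀ t ∈ Icc a b, g₁ t = g₂ t + c) :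
    rdsMeasure hab hg₁ = rdsMeasure hab hg₂ :=
  Monotone.stieltjesFunction_measure_congr _ _ c fun t => h _ (projIcc a b hab t).2

lemma rdsMeasure_add {h : ℝ → ℝ} (hab : a ≤ b) (hg : MonotoneOn g (Icc a b))
    (hh : MonotoneOn h (Icc a b)) :
    rdsMeasure hab (hg.add hh) = rdsMeasure hab hg + rdsMeasure hab hh :=
  Monotone.stieltjesFunction_measure_add _ _

lemma rdsMeasure_split {m : ℝ} (ham : a ≤ m) (hmb : m ≤ b) (hg : MonotoneOn g (Icc a b)) :
    rdsMeasure (ham.trans hmb) hg = rdsMeasure ham (hg.mono (Icc_subset_Icc_right hmb)) +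
      rdsMeasure hmb (hg.mono (Icc_subset_Icc_left ham)) := by
  rw [rdsMeasure, rdsMeasure, rdsMeasure, ← Monotone.stieltjesFunction_measure_add]
  refine Monotone.stieltjesFunction_measure_congr _ _ (-g m) fun t => ?_
  simp only [IccExtend_apply, comp_apply]
  rcases le_total t m with htm | hmt
  · rw [max_eq_left ((min_le_right b t).trans htm), min_eq_right (htm.trans hmb),
      min_eq_right htm]
    ring
  · rw [max_eq_right (le_min hmb hmt), max_eq_right (ham.trans (le_min hmb hmt)),
      min_eq_left hmt, max_eq_right ham]
    ring

end RDSMeasure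

instance MeasureTheory.Measure.isLocallyFiniteMeasure_add {X : Type*} [TopologicalSpace X]
    [MeasurableSpace X] (μ ν : Measure X) [IsLocallyFiniteMeasure μ] [IsLocallyFiniteMeasure ν] :
    IsLocallyFiniteMeasure (μ + ν) where
  finiteAtNhds x := by
    obtain ⟨s, hs, hμs⟩ := μ.finiteAt_nhds x
    obtain ⟨t, ht, hνt⟩ := ν.finiteAt_nhds x
    refine ⟨s ∩ t, inter_mem hs ht, ?_⟩
    rw [Measure.add_apply]
    exact ENNReal.add_lt_top.2 ⟨(measure_mono inter_subset_left).trans_lt hμs,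
      (measure_mono inter_subset_right).trans_lt hνt⟩

lemma BddOn.mono {a b a' b' : ℝ} {f : ℝ → ℝ} (hf : BddOn a b f) (ha : a ≤ a') (hb : b' ≤ b) :
    BddOn a' b' f :=
  let ⟨M, hM⟩ := hf
  ⟨M, fun t ht => hM t ⟨ha.trans ht.1, ht.2.trans hb⟩⟩

lemma BddOn.neg {a b : ℝ} {f : ℝ → ℝ} (hf : BddOn a b f) : BddOn a b fun t => -f t :=
  let ⟨M, hM⟩ := hf
  ⟨M, fun t ht => (abs_neg (f t)).symm ▸ hM t ht⟩

def upperStepIntegral (a b : ℝ) (μ : Measure ℝ) (f : ℝ → ℝ) : ℝ :=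
  sInf ((fun u => ∫ t in Icc a b, u t ∂μ) '' {u | IsStepFun a b u ∧ ∀ t ∈ Icc a b, f t ≤ u t})

section UpperStepIntegral

variable {a b c d : ℝ} {μ ν : Measure ℝ} {f f' u : ℝ → ℝ}

lemma BddOn.bddBelow_stepIntegrals [IsLocallyFiniteMeasure μ] (hf : BddOn a b f) :
    BddBelow ((fun u => ∫ t in Icc a b, u t ∂μ) ''
      {u | IsStepFun a b u ∧ ∀ t ∈ Icc a b, f t ≤ u t}) := by
  obtain ⟨M, hM⟩ := hf
  refine ⟨μ.real (Icc a b) * -M, ?_⟩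
  rintro _ ⟨u, ⟨hu, hfu⟩, rfl⟩
  rw [← smul_eq_mul, ← setIntegral_const]
  exact setIntegral_mono_on (integrableOn_const measure_Icc_lt_top.ne) hu.integrableOn
    measurableSet_Icc fun t ht => (neg_le_of_abs_le (hM t ht)).trans (hfu t ht)

lemma upperStepIntegral_le [IsLocallyFiniteMeasure μ] (hf : BddOn a b f) (hu : IsStepFun a b u)
    (hfu : ∀ t ∈ Icc a b, f t ≤ u t) : upperStepIntegral a b μ f ≤ ∫ t in Icc a b, u t ∂μ :=
  csInf_le hf.bddBelow_stepIntegrals ⟨u, ⟨hu, hfu⟩, rfl⟩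

lemma le_upperStepIntegral (hab : a ≤ b) (hf : BddOn a b f) {r : ℝ}
    (h : ∀ u, IsStepFun a b u → (∀ t ∈ Icc a b, f t ≤ u t) → r ≤ ∫ t in Icc a b, u t ∂μ) :
    r ≤ upperStepIntegral a b μ f := by
  obtain ⟨M, hM⟩ := hf
  refine le_csInf ⟨_, fun _ => M, ⟨isStepFun_const hab M, fun t ht => (abs_le.1 (hM t ht)).2⟩,
    rfl⟩ ?_
  rintro _ ⟨u, ⟨hu, hfu⟩, rfl⟩
  exact h u hu hfu

lemma le_upperStepIntegral_add (hab : a ≤ b) (hcd : c ≤ d) (hf : BddOn a b f)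
    (hf' : BddOn c d f') {r : ℝ}
    (h : ∀ u v, IsStepFun a b u → (∀ t ∈ Icc a b, f t ≤ u t) → IsStepFun c d v →
      (∀ t ∈ Icc c d, f' t ≤ v t) → r ≤ ∫ t in Icc a b, u t ∂μ + ∫ t in Icc c d, v t ∂ν) :
    r ≤ upperStepIntegral a b μ f + upperStepIntegral c d ν f' := by
  rw [← sub_le_iff_le_add']
  refine le_upperStepIntegral hcd hf' fun v hv hfv => ?_
  rw [sub_le_comm]
  refine le_upperStepIntegral hab hf fun u hu hfu => ?_
  linarith [h u v hu hfu hv hfv]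

lemma upperStepIntegral_neg_add_nonneg [IsLocallyFiniteMeasure μ] (hab : a ≤ b)
    (hf : BddOn a b f) :
    0 ≤ upperStepIntegral a b μ (fun t => -f t) + upperStepIntegral a b μ f := by
  refine le_upperStepIntegral_add hab hab hf.neg hf fun u v hu hfu hv hfv => ?_
  rw [← integral_add hu.integrableOn hv.integrableOn]
  exact setIntegral_nonneg measurableSet_Icc fun t ht => by linarith [hfu t ht, hfv t ht]

lemma upperStepIntegral_add_measure_le [IsLocallyFiniteMeasure μ]
    [IsLocallyFiniteMeasure ν] (hab : a ≤ b) (hf : BddOn a b f) :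
    upperStepIntegral a b (μ + ν) f ≤ upperStepIntegral a b μ f + upperStepIntegral a b ν f := by
  refine le_upperStepIntegral_add hab hab hf hf fun u v hu hfu hv hfv => ?_
  have hw := hu.min hab hv
  calc upperStepIntegral a b (μ + ν) f
      ≤ ∫ t in Icc a b, min (u t) (v t) ∂(μ + ν) :=
        upperStepIntegral_le hf hw fun t ht => le_min (hfu t ht) (hfv t ht)
    _ = ∫ t in Icc a b, min (u t) (v t) ∂μ + ∫ t in Icc a b, min (u t) (v t) ∂ν := by
        rw [Measure.restrict_add, integral_add_measure hw.integrableOn hw.integrableOn]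
    _ ≤ ∫ t in Icc a b, u t ∂μ + ∫ t in Icc a b, v t ∂ν :=
        add_le_add
          (setIntegral_mono_on hw.integrableOn hu.integrableOn measurableSet_Icc
            fun t _ => min_le_left _ _)
          (setIntegral_mono_on hw.integrableOn hv.integrableOn measurableSet_Icc
            fun t _ => min_le_right _ _)

lemma setIntegral_Icc_add_measure {m : ℝ} (ham : a ≤ m) (hmb : m ≤ b) (hμ : μ (Ioc m b) = 0)
    (hν : ν (Ico a m) = 0) (hu : IntegrableOn u (Icc a b) μ) (hu' : IntegrableOn u (Icc a b) ν) :
    ∫ t in Icc a b, u t ∂(μ + ν) = ∫ t in Icc a m, u t ∂μ + ∫ t in Icc m b, u t ∂ν := by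
  have hleft : ∫ t in Icc a b, u t ∂μ = ∫ t in Icc a m, u t ∂μ := by
    rw [← Icc_union_Ioc_eq_Icc ham hmb, setIntegral_union
      (disjoint_left.2 fun t h1 h2 => h2.1.not_ge h1.2) measurableSet_Ioc
      (hu.mono_set (Icc_subset_Icc_right hmb))
      (hu.mono_set (Ioc_subset_Icc_self.trans (Icc_subset_Icc_left ham))),
      setIntegral_measure_zero _ hμ, add_zero]
  have hright : ∫ t in Icc a b, u t ∂ν = ∫ t in Icc m b, u t ∂ν := by
    rw [← Ico_union_Icc_eq_Icc ham hmb, setIntegral_union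
      (disjoint_left.2 fun t h1 h2 => h1.2.not_ge h2.1) measurableSet_Icc
      (hu'.mono_set (Ico_subset_Icc_self.trans (Icc_subset_Icc_right hmb)))
      (hu'.mono_set (Icc_subset_Icc_left ham)), setIntegral_measure_zero _ hν, zero_add]
  rw [Measure.restrict_add, integral_add_measure hu hu', hleft, hright]

lemma upperStepIntegral_add_measure_split [IsLocallyFiniteMeasure μ] [IsLocallyFiniteMeasure ν]
    {m : ℝ} (ham : a ≤ m) (hmb : m ≤ b) (hμ : μ (Ioc m b) = 0) (hν : ν (Ico a m) = 0)
    (hf : BddOn a b f) :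
    upperStepIntegral a b (μ + ν) f = upperStepIntegral a m μ f + upperStepIntegral m b ν f := by
  have hf₁ : BddOn a m f := hf.mono le_rfl hmb
  have hf₂ : BddOn m b f := hf.mono ham le_rfl
  apply le_antisymm
  · refine le_upperStepIntegral_add ham hmb hf₁ hf₂ fun u v hu hfu hv hfv => ?_
    obtain ⟨w, hw, hfw, hwu, hwv⟩ := exists_isStepFun_glue_le ham hmb hu hv hfu hfv
    calc upperStepIntegral a b (μ + ν) f ≤ ∫ t in Icc a b, w t ∂(μ + ν) :=
          upperStepIntegral_le hf hw hfw
      _ = ∫ t in Icc a m, w t ∂μ + ∫ t in Icc m b, w t ∂ν :=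
          setIntegral_Icc_add_measure ham hmb hμ hν hw.integrableOn hw.integrableOn
      _ ≤ ∫ t in Icc a m, u t ∂μ + ∫ t in Icc m b, v t ∂ν :=
          add_le_add
            (setIntegral_mono_on (hw.integrableOn.mono_set (Icc_subset_Icc_right hmb))
              hu.integrableOn measurableSet_Icc hwu)
            (setIntegral_mono_on (hw.integrableOn.mono_set (Icc_subset_Icc_left ham))
              hv.integrableOn measurableSet_Icc hwv)
  · refine le_upperStepIntegral (ham.trans hmb) hf fun u hu hfu => ?_
    rw [setIntegral_Icc_add_measure ham hmb hμ hν hu.integrableOn hu.integrableOn]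
    exact add_le_add
      (upperStepIntegral_le hf₁ (hu.mono le_rfl ham hmb) fun t ht => hfu t ⟨ht.1, ht.2.trans hmb⟩)
      (upperStepIntegral_le hf₂ (hu.mono ham hmb le_rfl) fun t ht => hfu t ⟨ham.trans ht.1, ht.2⟩)

end UpperStepIntegral

section RDSEnvelopes

variable {a b : ℝ} {g f u : ℝ → ℝ}

lemma stepInt_eq_integral (hab : a ≤ b) (hg : MonotoneOn g (Icc a b)) {P : RDSPartition a b}
    (hu : IsStepOn a b u P) : stepInt a b g P u = ∫ t in Icc a b, u t ∂rdsMeasure hab hg := by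
  rw [(P.integral_Icc_of_isStepOn hu).2, stepInt]
  congr 1
  · refine Finset.sum_congr rfl fun i hi => ?_
    rw [rdsMeasure_real_singleton hab hg
      (P.x_mem_Icc (Nat.lt_succ_iff.1 (Finset.mem_range.1 hi)))]
  · refine Finset.sum_congr rfl fun i hi => ?_
    have hi' : i < P.n := Finset.mem_range.1 hi
    rw [rdsMeasure_real_Ioo hab hg (P.x_mem_Icc hi'.le).1 (P.mono i hi') (P.x_mem_Icc hi').2]

lemma upperRDS_eq_upperStepIntegral (hab : a ≤ b) (hg : MonotoneOn g (Icc a b)) :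
    upperRDS a b g f = upperStepIntegral a b (rdsMeasure hab hg) f := by
  unfold upperRDS upperStepIntegral
  congr 1
  ext r
  constructor
  · rintro ⟨u, P, hP, hfu, rfl⟩
    exact ⟨u, ⟨⟨P, hP⟩, hfu⟩, (stepInt_eq_integral hab hg hP).symm⟩
  · rintro ⟨u, ⟨⟨P, hP⟩, hfu⟩, rfl⟩
    exact ⟨u, P, hP, hfu, (stepInt_eq_integral hab hg hP).symm⟩

lemma stepInt_neg (P : RDSPartition a b) :
    stepInt a b g P (fun t => -u t) = -stepInt a b g P u := by
  simp only [stepInt, neg_mul, Finset.sum_neg_distrib, neg_add]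

lemma lowerRDS_eq_neg_upperRDS : lowerRDS a b g f = -upperRDS a b g fun t => -f t := by
  rw [lowerRDS, upperRDS, ← Real.sSup_neg]
  congr 1
  ext r
  simp only [Set.mem_neg]
  constructor
  · rintro ⟨v, P, hP, hvf, rfl⟩
    exact ⟨fun t => -v t, P, fun i hi s hs => by simp only [hP i hi s hs],
      fun t ht => neg_le_neg (hvf t ht), (stepInt_neg P).symm⟩
  · rintro ⟨u, P, hP, hfu, hr⟩
    refine ⟨fun t => -u t, P, fun i hi s hs => by simp only [hP i hi s hs],
      fun t ht => neg_le.1 (hfu t ht), ?_⟩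
    rw [stepInt_neg, ← hr, neg_neg]

lemma rdsIntegrableInc_iff :
    RDSIntegrableInc a b g f ↔ upperRDS a b g (fun t => -f t) + upperRDS a b g f = 0 := by
  rw [RDSIntegrableInc, lowerRDS_eq_neg_upperRDS, neg_eq_iff_add_eq_zero]

lemma upperRDS_neg_add_nonneg (hab : a ≤ b) (hg : MonotoneOn g (Icc a b)) (hf : BddOn a b f) :
    0 ≤ upperRDS a b g (fun t => -f t) + upperRDS a b g f := by
  rw [upperRDS_eq_upperStepIntegral hab hg, upperRDS_eq_upperStepIntegral hab hg]
  exact upperStepIntegral_neg_add_nonneg hab hf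

lemma upperRDS_congr {g₁ g₂ : ℝ → ℝ} (hab : a ≤ b) (hg₂ : MonotoneOn g₂ (Icc a b)) (c : ℝ)
    (h : ∀ t ∈ Icc a b, g₁ t = g₂ t + c) (f : ℝ → ℝ) : upperRDS a b g₁ f = upperRDS a b g₂ f := by
  have hg₁ : MonotoneOn g₁ (Icc a b) := fun s hs t ht hst => by
    rw [h s hs, h t ht]
    exact add_le_add_left (hg₂ hs ht hst) c
  rw [upperRDS_eq_upperStepIntegral hab hg₁, upperRDS_eq_upperStepIntegral hab hg₂,
    rdsMeasure_congr hab hg₁ hg₂ c h]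

lemma rdsIntegrableInc_congr {g₁ g₂ : ℝ → ℝ} (hab : a ≤ b) (hg₂ : MonotoneOn g₂ (Icc a b))
    (c : ℝ) (h : ∀ t ∈ Icc a b, g₁ t = g₂ t + c) :
    RDSIntegrableInc a b g₁ f ↔ RDSIntegrableInc a b g₂ f := by
  rw [rdsIntegrableInc_iff, rdsIntegrableInc_iff, upperRDS_congr hab hg₂ c h,
    upperRDS_congr hab hg₂ c h]

lemma upperRDS_split {m : ℝ} (hm : m ∈ Icc a b) (hg : MonotoneOn g (Icc a b))
    (hf : BddOn a b f) : upperRDS a b g f = upperRDS a m g f + upperRDS m b g f := by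
  have hg₁ := hg.mono (Icc_subset_Icc_right hm.2)
  have hg₂ := hg.mono (Icc_subset_Icc_left hm.1)
  rw [upperRDS_eq_upperStepIntegral (hm.1.trans hm.2) hg, upperRDS_eq_upperStepIntegral hm.1 hg₁,
    upperRDS_eq_upperStepIntegral hm.2 hg₂, rdsMeasure_split hm.1 hm.2 hg]
  exact upperStepIntegral_add_measure_split hm.1 hm.2 (rdsMeasure_Ioc_eq_zero hm.1 hg₁ hm.2)
    (rdsMeasure_Ico_eq_zero hm.2 hg₂ hm.1) hf

lemma rdsIntegrableInc_split_iff {m : ℝ} (hm : m ∈ Icc a b) (hg : MonotoneOn g (Icc a b))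
    (hf : BddOn a b f) :
    RDSIntegrableInc a b g f ↔ RDSIntegrableInc a m g f ∧ RDSIntegrableInc m b g f := by
  have h₁ := upperRDS_neg_add_nonneg hm.1 (hg.mono (Icc_subset_Icc_right hm.2))
    (hf.mono le_rfl hm.2)
  have h₂ := upperRDS_neg_add_nonneg hm.2 (hg.mono (Icc_subset_Icc_left hm.1))
    (hf.mono hm.1 le_rfl)
  rw [rdsIntegrableInc_iff, rdsIntegrableInc_iff, rdsIntegrableInc_iff, upperRDS_split hm hg hf,
    upperRDS_split hm hg hf.neg]
  constructor
  · intro h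
    constructor <;> linarith
  · rintro ⟨h₁', h₂'⟩
    linarith

lemma upperRDS_add {h : ℝ → ℝ} (hab : a ≤ b) (hg : MonotoneOn g (Icc a b))
    (hh : MonotoneOn h (Icc a b)) (hf : BddOn a b f) (ig : RDSIntegrableInc a b g f)
    (ih : RDSIntegrableInc a b h f) :
    upperRDS a b (fun t => g t + h t) f = upperRDS a b g f + upperRDS a b h f := by
  have hsub : ∀ f', BddOn a b f' →
      upperRDS a b (fun t => g t + h t) f' ≤ upperRDS a b g f' + upperRDS a b h f' := by
    intro f' hf'
    rw [upperRDS_eq_upperStepIntegral hab (hg.add hh), upperRDS_eq_upperStepIntegral hab hg,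
      upperRDS_eq_upperStepIntegral hab hh, rdsMeasure_add]
    exact upperStepIntegral_add_measure_le hab hf'
  rw [rdsIntegrableInc_iff] at ig ih
  -- the reverse inequality is subadditivity for `-f` combined with `upper (-f) + upper f ≥ 0`
  linarith [hsub f hf, hsub _ hf.neg, upperRDS_neg_add_nonneg hab (hg.add hh) hf]

lemma upperRDS_sub_eq {p q p' q' : ℝ → ℝ} (hab : a ≤ b) (hp : MonotoneOn p (Icc a b))
    (hq : MonotoneOn q (Icc a b)) (hp' : MonotoneOn p' (Icc a b)) (hq' : MonotoneOn q' (Icc a b))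
    (hf : BddOn a b f) (hpq : ∀ t ∈ Icc a b, p t - q t = p' t - q' t)
    (ip : RDSIntegrableInc a b p f) (iq : RDSIntegrableInc a b q f)
    (ip' : RDSIntegrableInc a b p' f) (iq' : RDSIntegrableInc a b q' f) :
    upperRDS a b p f - upperRDS a b q f = upperRDS a b p' f - upperRDS a b q' f := by
  have hcross : upperRDS a b (fun t => p t + q' t) f = upperRDS a b (fun t => p' t + q t) f :=
    upperRDS_congr hab (hp'.add hq) 0 (fun t ht => by linarith [hpq t ht]) f
  rw [upperRDS_add hab hp hq' hf ip iq', upperRDS_add hab hp' hq hf ip' iq] at hcross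
  linarith

end RDSEnvelopes

section RDSIntegral

variable {a b m : ℝ} {α f g₁ g₂ : ℝ → ℝ}

lemma rdsIntegral_eq_sub {p q : ℝ → ℝ} (hab : a ≤ b) (hf : BddOn a b f)
    (hp : MonotoneOn p (Icc a b)) (hq : MonotoneOn q (Icc a b))
    (hα : ∀ t ∈ Icc a b, α t = p t - q t) (ip : RDSIntegrableInc a b p f)
    (iq : RDSIntegrableInc a b q f) :
    RDSIntegral a b α f = upperRDS a b p f - upperRDS a b q f := by
  have h : RDSIntegrable a b α f := ⟨p, q, hp, hq, hα, ip, iq⟩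
  obtain ⟨hp', hq', hα', ip', iq'⟩ := h.choose_spec.choose_spec
  rw [RDSIntegral, dif_pos h]
  exact upperRDS_sub_eq hab hp' hq' hp hq hf (fun t ht => by rw [← hα' t ht, hα t ht]) ip' iq'
    ip iq

def glueShift (m : ℝ) (g₁ g₂ : ℝ → ℝ) (t : ℝ) : ℝ :=
  if t ≤ m then g₁ t else g₂ t + (g₁ m - g₂ m)

lemma glueShift_of_le {t : ℝ} (ht : t ≤ m) : glueShift m g₁ g₂ t = g₁ t := if_pos ht

lemma glueShift_of_ge {t : ℝ} (ht : m ≤ t) : glueShift m g₁ g₂ t = g₂ t + (g₁ m - g₂ m) := by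
  rcases ht.lt_or_eq with h | rfl
  · exact if_neg h.not_ge
  · rw [glueShift_of_le le_rfl]
    ring

lemma monotoneOn_glueShift (hm : m ∈ Icc a b) (h₁ : MonotoneOn g₁ (Icc a m))
    (h₂ : MonotoneOn g₂ (Icc m b)) : MonotoneOn (glueShift m g₁ g₂) (Icc a b) := by
  rw [← Icc_union_Icc_eq_Icc hm.1 hm.2]
  exact (h₁.congr fun t ht => (glueShift_of_le ht.2).symm).union_right
    ((h₂.add_const _).congr fun t ht => (glueShift_of_ge ht.1).symm) (isGreatest_Icc hm.1)
    (isLeast_Icc hm.2)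

lemma rdsIntegrableInc_glueShift (hm : m ∈ Icc a b) (hf : BddOn a b f)
    (h₁ : MonotoneOn g₁ (Icc a m)) (h₂ : MonotoneOn g₂ (Icc m b)) (i₁ : RDSIntegrableInc a m g₁ f)
    (i₂ : RDSIntegrableInc m b g₂ f) : RDSIntegrableInc a b (glueShift m g₁ g₂) f := by
  rw [rdsIntegrableInc_split_iff hm (monotoneOn_glueShift hm h₁ h₂) hf,
    rdsIntegrableInc_congr (g₁ := glueShift m g₁ g₂) hm.1 h₁ 0 fun t ht => by
      rw [glueShift_of_le ht.2, add_zero],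
    rdsIntegrableInc_congr (g₁ := glueShift m g₁ g₂) hm.2 h₂ _ fun t ht => glueShift_of_ge ht.1]
  exact ⟨i₁, i₂⟩

lemma rdsIntegrable_split_iff (hm : m ∈ Icc a b) (hf : BddOn a b f) :
    RDSIntegrable a b α f ↔ RDSIntegrable a m α f ∧ RDSIntegrable m b α f := by
  have hsub₁ : Icc a m ⊆ Icc a b := Icc_subset_Icc_right hm.2
  have hsub₂ : Icc m b ⊆ Icc a b := Icc_subset_Icc_left hm.1
  constructor
  · rintro ⟨p, q, hp, hq, hα, ip, iq⟩
    obtain ⟨ip₁, ip₂⟩ := (rdsIntegrableInc_split_iff hm hp hf).1 ip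
    obtain ⟨iq₁, iq₂⟩ := (rdsIntegrableInc_split_iff hm hq hf).1 iq
    exact ⟨⟨p, q, hp.mono hsub₁, hq.mono hsub₁, fun t ht => hα t (hsub₁ ht), ip₁, iq₁⟩,
      ⟨p, q, hp.mono hsub₂, hq.mono hsub₂, fun t ht => hα t (hsub₂ ht), ip₂, iq₂⟩⟩
  · rintro ⟨⟨p₁, q₁, hp₁, hq₁, hα₁, ip₁, iq₁⟩, ⟨p₂, q₂, hp₂, hq₂, hα₂, ip₂, iq₂⟩⟩
    refine ⟨glueShift m p₁ p₂, glueShift m q₁ q₂, monotoneOn_glueShift hm hp₁ hp₂,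
      monotoneOn_glueShift hm hq₁ hq₂, fun t ht => ?_,
      rdsIntegrableInc_glueShift hm hf hp₁ hp₂ ip₁ ip₂,
      rdsIntegrableInc_glueShift hm hf hq₁ hq₂ iq₁ iq₂⟩
    rcases le_total t m with htm | hmt
    · rw [glueShift_of_le htm, glueShift_of_le htm]
      exact hα₁ t ⟨ht.1, htm⟩
    · rw [glueShift_of_ge hmt, glueShift_of_ge hmt, hα₂ t ⟨hmt, ht.2⟩]
      linarith [hα₁ m ⟨hm.1, le_rfl⟩, hα₂ m ⟨le_rfl, hm.2⟩]

end RDSIntegral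

end

theorem stmt10_general (a b m : ℝ) (hm : m ∈ Set.Ioo a b) (α f : ℝ → ℝ)
    (hf : BddOn a b f) :
    (RDSIntegrable a b α f ↔ RDSIntegrable a m α f ∧ RDSIntegrable m b α f) ∧
    (RDSIntegrable a b α f →
      RDSIntegral a m α f + RDSIntegral m b α f = RDSIntegral a b α f) := by
  have hm' : m ∈ Icc a b := Ioo_subset_Icc_self hm
  have hsub₁ : Icc a m ⊆ Icc a b := Icc_subset_Icc_right hm'.2
  have hsub₂ : Icc m b ⊆ Icc a b := Icc_subset_Icc_left hm'.1
  refine ⟨rdsIntegrable_split_iff hm' hf, ?_⟩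
  rintro ⟨p, q, hp, hq, hα, ip, iq⟩
  obtain ⟨ip₁, ip₂⟩ := (rdsIntegrableInc_split_iff hm' hp hf).1 ip
  obtain ⟨iq₁, iq₂⟩ := (rdsIntegrableInc_split_iff hm' hq hf).1 iq
  rw [rdsIntegral_eq_sub hm'.1 (hf.mono le_rfl hm'.2) (hp.mono hsub₁) (hq.mono hsub₁)
      (fun t ht => hα t (hsub₁ ht)) ip₁ iq₁,
    rdsIntegral_eq_sub hm'.2 (hf.mono hm'.1 le_rfl) (hp.mono hsub₂) (hq.mono hsub₂)
      (fun t ht => hα t (hsub₂ ht)) ip₂ iq₂,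
    rdsIntegral_eq_sub (hm'.1.trans hm'.2) hf hp hq hα ip iq, upperRDS_split hm' hp hf,
    upperRDS_split hm' hq hf]
  ring

theorem stmt10 (a b m : ℝ) (hm : m ∈ Set.Ioo a b) (α f : ℝ → ℝ)
    (hα : BoundedVariationOn α (Set.Icc a b)) (hf : BddOn a b f) :
    (RDSIntegrable a b α f ↔ RDSIntegrable a m α f ∧ RDSIntegrable m b α f) ∧
    (RDSIntegrable a b α f →
      RDSIntegral a m α f + RDSIntegral m b α f = RDSIntegral a b α f) :=
  stmt10_general a b m hm α f hf
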